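/- arXiv:2003.07624 — 4 statements merged into one kernel-verified Lean document; each statement's English description precedes it below -/
import Mathlib

section
/- Let d ≥ 1 and n ≥ 2 be integers. Let τ be a tree with vertex set {1, …, n} whose degrees all satisfy 1 ≤ d_i ≤ 2d, and let w_τ be the number of tuples (x_1, …, x_n) ∈ (ℤ^d)^n with x_1 = 0, the x_i pairwise distinct, and |x_i − x_j| = 1 for every edge {i, j} of τ. Then w_τ ≤ 2d·(2d−1)^{n−2}. -/
/-- L¹ (taxicab) distance between two points of `ℤ^d`. -/
def dist1 {d : ℕ} (x z : Fin d → ℤ) : ℤ := ∑ i, |x i - z i|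

/-- The weight `w_τ` of a graph `τ` on a vertex set `V` with distinguished root `r`
(for a tree on `{1,…,n}` the root is vertex `1`): the number of tuples `(x_v)_{v ∈ V}` of points
of `ℤ^d` with `x_r = 0`, the `x_v` pairwise distinct, and `|x_i − x_j| = 1` for every edge
`{i,j}` of `τ`. -/
noncomputable def treeWeight (d : ℕ) {V : Type*} (r : V) (G : SimpleGraph V) : ℕ :=
  {x : V → (Fin d → ℤ) | x r = 0 ∧ Function.Injective x ∧
    ∀ i j, G.Adj i j → dist1 (x i) (x j) = 1}.ncard

lemma dist1_sub {d : ℕ} (a b : Fin d → ℤ) : dist1 (a - b) 0 = dist1 a b := by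
  unfold dist1; simp

lemma sphere_char {d : ℕ} (u : Fin d → ℤ) (hu : dist1 u 0 = 1) :
    ∃ p : Fin d × Bool, u = fun j => if j = p.1 then (if p.2 then 1 else -1) else 0 := by
  have h : ∑ i, |u i| = 1 := by simpa [dist1] using hu
  have hex : ∃ i, u i ≠ 0 := by
    by_contra hcon
    push_neg at hcon
    simp [hcon] at h
  obtain ⟨i, hi⟩ := hex
  have h1 : |u i| ≤ 1 := by
    calc |u i| ≤ ∑ j, |u j| :=
      Finset.single_le_sum (fun j _ => abs_nonneg (u j)) (Finset.mem_univ i)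
    _ = 1 := h
  have h2 : 1 ≤ |u i| := Int.one_le_abs hi
  have habs : |u i| = 1 := le_antisymm h1 h2
  have hz : ∀ j, j ≠ i → u j = 0 := by
    intro j hj
    have hsum : ∑ k ∈ Finset.univ.erase i, |u k| = 0 := by
      have := Finset.add_sum_erase Finset.univ (fun k => |u k|) (Finset.mem_univ i)
      linarith [habs, h, this]
    have := Finset.sum_eq_zero_iff_of_nonneg (fun k _ => abs_nonneg (u k)) |>.mp hsum j
      (Finset.mem_erase.mpr ⟨hj, Finset.mem_univ j⟩)
    exact abs_eq_zero.mp this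
  refine ⟨(i, decide (u i = 1)), ?_⟩
  funext j
  by_cases hji : j = i
  · subst hji
    rcases abs_eq (by norm_num : (0:ℤ) ≤ 1) |>.mp habs with h1' | h1' <;> simp [h1']
  · simp [hji, hz j hji]

def codeN (a b : ℕ) : ℕ := if a < b then a else a - 1

lemma codeN_lt {a b D : ℕ} (hab : a ≠ b) (ha : a < D) (hb : b < D) : codeN a b < D - 1 := by
  unfold codeN; split <;> omega

lemma codeN_inj {a a' b : ℕ} (hab : a ≠ b) (hab' : a' ≠ b) (h : codeN a b = codeN a' b) :
    a = a' := by
  unfold codeN at h; split at h <;> split at h <;> omega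

/-- If `τ` is a tree on `{1,…,n}` whose degrees all satisfy `1 ≤ d_i ≤ 2d`, then
`w_τ ≤ 2d·(2d−1)^{n−2}`. -/
theorem stmt2 (d n : ℕ) (hd : 1 ≤ d) (hn : 2 ≤ n)
    (G : SimpleGraph (Fin n)) (hG : G.IsTree)
    (hdeg : ∀ i, 1 ≤ (G.neighborSet i).ncard ∧ (G.neighborSet i).ncard ≤ 2 * d) :
    treeWeight d (⟨0, by omega⟩ : Fin n) G ≤ 2 * d * (2 * d - 1) ^ (n - 2) := by
  classical
  set r : Fin n := ⟨0, by omega⟩ with hr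
  have hconn : G.Connected := hG.isConnected
  -- a fixed neighbor of the root
  obtain ⟨c, hc⟩ : ∃ c, G.Adj r c := by
    have h1 := (hdeg r).1
    rcases (G.neighborSet r).eq_empty_or_nonempty with h | ⟨c, hc⟩
    · rw [h] at h1; simp at h1
    · exact ⟨c, hc⟩
  have hcr : c ≠ r := fun h => G.loopless.irrefl r (h ▸ hc)
  -- parent function
  have hparex : ∀ v : Fin n, ∃ u, v ≠ r →
      G.Adj u v ∧ G.dist r u + 1 = G.dist r v := by
    intro v
    by_cases hv : v = r
    · exact ⟨r, fun h => absurd hv h⟩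
    · obtain ⟨p, hp⟩ := hconn.exists_walk_length_eq_dist v r
      have hnil : ¬ p.Nil := SimpleGraph.Walk.not_nil_of_ne hv
      obtain ⟨u, hadj, q, rfl⟩ := SimpleGraph.Walk.not_nil_iff.mp hnil
      refine ⟨u, fun _ => ⟨hadj.symm, ?_⟩⟩
      have hql : q.length + 1 = G.dist v r := by simpa using hp
      have h1 : G.dist r u ≤ q.length := by
        rw [SimpleGraph.dist_comm]; exact SimpleGraph.dist_le q
      have h2 : G.dist r v ≤ G.dist r u + G.dist u v := hconn.dist_triangle
      have h3 : G.dist u v = 1 := SimpleGraph.dist_eq_one_iff_adj.mpr hadj.symm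
      rw [show G.dist v r = G.dist r v from SimpleGraph.dist_comm] at hql
      omega
  choose par hpar using hparex
  -- witness function
  set wit : Fin n → Fin n := fun v => if par v = r then c else par (par v) with hwit
  -- encoding of unit sphere vectors
  have hEex : ∀ u : Fin d → ℤ, ∃ p : Fin d × Bool, dist1 u 0 = 1 →
      u = fun j => if j = p.1 then (if p.2 then 1 else -1) else 0 := by
    intro u
    by_cases hu : dist1 u 0 = 1
    · obtain ⟨p, hp⟩ := sphere_char u hu; exact ⟨p, fun _ => hp⟩
    · exact ⟨(⟨0, hd⟩, true), fun h => absurd h hu⟩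
  choose E hE using hEex
  set ee : (Fin d → ℤ) → ℕ := fun u => (E u).1.1 + (if (E u).2 then 0 else d) with hee
  have ee_lt : ∀ u, ee u < 2 * d := by
    intro u
    have := (E u).1.isLt
    simp only [hee]
    split <;> omega
  have ee_inj : ∀ u u', dist1 u 0 = 1 → dist1 u' 0 = 1 → ee u = ee u' → u = u' := by
    intro u u' hu hu' heq
    have h1 := hE u hu
    have h2 := hE u' hu'
    have hEeq : E u = E u' := by
      have i1 := (E u).1.isLt
      have i2 := (E u').1.isLt
      unfold ee at heq
      beta_reduce at heq
      cases hb : (E u).2 <;> cases hb' : (E u').2 <;>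
        simp only [hb, hb', if_true, if_false, Bool.false_eq_true] at heq
      · exact Prod.ext (Fin.ext (by omega)) (hb.trans hb'.symm)
      · omega
      · omega
      · exact Prod.ext (Fin.ext (by omega)) (hb.trans hb'.symm)
    rw [h1, h2, hEeq]
  -- the set
  rw [treeWeight]
  set X : Set ((Fin n) → (Fin d → ℤ)) := {x | x r = 0 ∧ Function.Injective x ∧
    ∀ i j, G.Adj i j → dist1 (x i) (x j) = 1} with hX
  -- basic facts about members
  have factA : ∀ x ∈ X, ∀ v, v ≠ r → dist1 (x v - x (par v)) 0 = 1 := by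
    intro x hx v hv
    rw [dist1_sub]
    exact hx.2.2 v (par v) ((hpar v hv).1.symm)
  have factB : ∀ v, v ≠ r → v ≠ c → G.Adj (par v) (wit v) ∧ wit v ≠ v := by
    intro v hv hvc
    by_cases hp : par v = r
    · simp only [hwit, hp, if_true]
      exact ⟨hp ▸ hc, fun h => hvc h.symm⟩
    · simp only [hwit, hp, if_false]
      have h1 := hpar v hv
      have h2 := hpar (par v) hp
      constructor
      · exact h2.1.symm
      · intro hcontra
        rw [hcontra] at h2
        omega
  have factC : ∀ x ∈ X, ∀ v, v ≠ r → v ≠ c →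
      dist1 (x (wit v) - x (par v)) 0 = 1 := by
    intro x hx v hv hvc
    rw [dist1_sub]
    exact hx.2.2 (wit v) (par v) (factB v hv hvc).1.symm
  have factD : ∀ x ∈ X, ∀ v, v ≠ r → v ≠ c →
      ee (x v - x (par v)) ≠ ee (x (wit v) - x (par v)) := by
    intro x hx v hv hvc heq
    have h1 := ee_inj _ _ (factA x hx v hv) (factC x hx v hv hvc) heq
    have hxv : x v = x (wit v) := sub_left_inj.mp h1
    exact (factB v hv hvc).2 (hx.2.1 hxv.symm)
  have factD' : ∀ x ∈ X, ∀ v, v ≠ r → v ≠ c →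
      ee (x v - x (par v)) ≠ ee (x (wit v) - x (par v)) := factD
  -- the finset of non-special vertices
  set S : Finset (Fin n) := {r, c}ᶜ with hS
  have hSmem : ∀ v, v ∈ S ↔ v ≠ r ∧ v ≠ c := by
    intro v; simp [hS]
  -- reconstruction: the codes determine the embedding
  have hmain : ∀ x ∈ X, ∀ x' ∈ X, ee (x c) = ee (x' c) →
      (∀ v, v ≠ r → v ≠ c →
        codeN (ee (x v - x (par v))) (ee (x (wit v) - x (par v)))
          = codeN (ee (x' v - x' (par v))) (ee (x' (wit v) - x' (par v)))) →
      x = x' := by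
    intro x hx x' hx' hcc hcode
    have hsphc : dist1 (x c) 0 = 1 := by
      have := hx.2.2 c r hc.symm; rwa [hx.1] at this
    have hsphc' : dist1 (x' c) 0 = 1 := by
      have := hx'.2.2 c r hc.symm; rwa [hx'.1] at this
    have hxc : x c = x' c := ee_inj _ _ hsphc hsphc' hcc
    have hkey : ∀ k, ∀ v, G.dist r v ≤ k → x v = x' v := by
      intro k
      induction k with
      | zero =>
        intro v hv
        have hrv : r = v := hconn.dist_eq_zero_iff.mp (Nat.le_zero.mp hv)
        rw [← hrv, hx.1, hx'.1]
      | succ k ih =>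
        intro v hv
        by_cases hvk : G.dist r v ≤ k
        · exact ih v hvk
        have hdist : G.dist r v = k + 1 := by omega
        have hvr : v ≠ r := by
          intro h
          rw [h] at hdist
          simp [SimpleGraph.dist_self] at hdist
        by_cases hvc : v = c
        · rw [hvc]; exact hxc
        have hp := hpar v hvr
        have hxp : x (par v) = x' (par v) := ih (par v) (by omega)
        have hxw : x (wit v) = x' (wit v) := by
          by_cases hpr : par v = r
          · have hwv : wit v = c := by simp [hwit, hpr]
            rw [hwv]; exact hxc
          · have hwv : wit v = par (par v) := by simp [hwit, hpr]
            have h2 := hpar (par v) hpr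
            rw [hwv]
            exact ih (par (par v)) (by omega)
        have hcodev := hcode v hvr hvc
        rw [← hxp, ← hxw] at hcodev
        have hu := factA x hx v hvr
        have hu' : dist1 (x' v - x (par v)) 0 = 1 := by
          have := factA x' hx' v hvr; rwa [← hxp] at this
        have hne1 : ee (x v - x (par v)) ≠ ee (x (wit v) - x (par v)) :=
          factD x hx v hvr hvc
        have hne2 : ee (x' v - x (par v)) ≠ ee (x (wit v) - x (par v)) := by
          have := factD x' hx' v hvr hvc
          rwa [← hxp, ← hxw] at this
        have heeq := codeN_inj hne1 hne2 hcodev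
        have hsub := ee_inj _ _ hu hu' heeq
        exact sub_left_inj.mp hsub
    funext v
    exact hkey (G.dist r v) v le_rfl
  -- the injection
  have hF : ∃ F : X → (Fin (2*d) × ({v // v ∈ S} → Fin (2*d-1))),
      Function.Injective F := by
    refine ⟨fun x => (⟨ee (x.1 c), ee_lt _⟩,
      fun v => ⟨codeN (ee (x.1 v.1 - x.1 (par v.1)))
        (ee (x.1 (wit v.1) - x.1 (par v.1))), ?_⟩), ?_⟩
    · obtain ⟨hv1, hv2⟩ := (hSmem v.1).mp v.2
      exact codeN_lt (factD x.1 x.2 v.1 hv1 hv2) (ee_lt _) (ee_lt _)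
    · intro x x' h
      obtain ⟨h1, h2⟩ := Prod.ext_iff.mp h
      apply Subtype.ext
      apply hmain x.1 x.2 x'.1 x'.2
      · exact congrArg Fin.val h1
      · intro v hv1 hv2
        have := congrFun h2 ⟨v, (hSmem v).mpr ⟨hv1, hv2⟩⟩
        exact congrArg Fin.val this
  obtain ⟨F, hFinj⟩ := hF
  have hcard : X.ncard ≤ Nat.card (Fin (2*d) × ({v // v ∈ S} → Fin (2*d-1))) := by
    rw [← Nat.card_coe_set_eq]
    exact Nat.card_le_card_of_injective F hFinj
  refine le_trans hcard (le_of_eq ?_)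
  rw [Nat.card_eq_fintype_card, Fintype.card_prod, Fintype.card_fun,
    Fintype.card_fin, Fintype.card_fin, Fintype.card_coe]
  have hScard : S.card = n - 2 := by
    rw [hS, Finset.card_compl]
    have h2 : ({r, c} : Finset (Fin n)).card = 2 := by
      rw [Finset.card_insert_of_notMem (by simpa using hcr.symm),
        Finset.card_singleton]
    rw [h2, Fintype.card_fin]
  rw [hScard]
end

section
/- Let C > 1, k₂ > 0 and k₁ ≥ (C−1)k₂ be real numbers. Then for every β ≥ 0, e^{−k₁β}(1 − e^{−k₂β}) ≤ 1/C. -/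
/-- If `C > 1`, `k₂ > 0` and `k₁ ≥ (C−1)k₂`, then `e^{−k₁β}(1 − e^{−k₂β}) ≤ 1/C` for every
`β ≥ 0`. -/
theorem stmt12 (C k₁ k₂ : ℝ) (hC : 1 < C) (hk2 : 0 < k₂) (hk1 : (C - 1) * k₂ ≤ k₁) :
    ∀ β : ℝ, 0 ≤ β → Real.exp (-k₁ * β) * (1 - Real.exp (-k₂ * β)) ≤ 1 / C := by
  intro β hβ
  set t : ℝ := k₂ * β with ht
  have ht0 : 0 ≤ t := mul_nonneg hk2.le hβ
  have hC0 : (0 : ℝ) < C := lt_trans one_pos hC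
  have hexp0 : 0 < Real.exp (-t) := Real.exp_pos _
  have he : 1 - t ≤ Real.exp (-t) := by
    have := Real.add_one_le_exp (-t); linarith
  have key : C * (1 - Real.exp (-t)) ≤ Real.exp ((C - 1) * t) := by
    have h1 : (C - 1) * t + 1 ≤ Real.exp ((C - 1) * t) := Real.add_one_le_exp _
    have h2 : C * (1 - Real.exp (-t)) ≤ 1 + (C - 1) * t := by
      rcases le_or_gt t 1 with h | h
      · nlinarith
      · nlinarith
    linarith
  have hnn : 0 ≤ 1 - Real.exp (-t) := by
    have : Real.exp (-t) ≤ 1 := Real.exp_le_one_iff.mpr (by linarith)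
    linarith
  have h3 : Real.exp (-k₁ * β) ≤ Real.exp (-((C - 1) * t)) := by
    apply Real.exp_le_exp.mpr
    have : (C - 1) * k₂ * β ≤ k₁ * β := mul_le_mul_of_nonneg_right hk1 hβ
    nlinarith
  have h4 : Real.exp (-k₁ * β) * (1 - Real.exp (-t)) ≤
      Real.exp (-((C - 1) * t)) * (1 - Real.exp (-t)) :=
    mul_le_mul_of_nonneg_right h3 hnn
  have h5 : Real.exp (-((C - 1) * t)) * (1 - Real.exp (-t)) ≤ 1 / C := by
    rw [Real.exp_neg]
    rw [inv_mul_le_iff₀ (Real.exp_pos _), mul_one_div, le_div_iff₀ hC0]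
    linarith
  have : -k₂ * β = -t := by ring
  rw [this]
  exact le_trans h4 h5
end

section
/- Let Λ be a finite set and let F : {unordered pairs of Λ} → R be a function into a commutative ring R. Then ∑_{g ∈ 𝒢_Λ} ∏_{{x,y} ∈ E_g} F_{xy} = ∑_{π ∈ Π(Λ)} ∏_{B ∈ π} ρ(B), where 𝒢_Λ is the set of all graphs with vertex set Λ, Π(Λ) is the set of all partitions of Λ, and ρ(B) = 1 if |B| = 1 while ρ(B) = ∑_{g ∈ G_B} ∏_{{x,y} ∈ E_g} F_{xy} if |B| ≥ 2, with G_B the set of connected graphs with vertex set B. -/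
open scoped Classical

set_option linter.unusedSectionVars false

namespace MayerAux

variable {V : Type*} [Fintype V] [DecidableEq V]

/-- The connected component block of `v` in `g`, as a finset. -/
noncomputable def block (g : SimpleGraph V) (v : V) : Finset V :=
  Finset.univ.filter (fun u => g.Reachable v u)

lemma mem_block {g : SimpleGraph V} {v u : V} : u ∈ block g v ↔ g.Reachable v u := by
  simp [block]

lemma self_mem_block (g : SimpleGraph V) (v : V) : v ∈ block g v :=
  mem_block.2 ⟨SimpleGraph.Walk.nil⟩

lemma block_eq_block {g : SimpleGraph V} {v u : V} (h : g.Reachable v u) :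
    block g v = block g u := by
  ext x
  simp only [mem_block]
  exact ⟨fun hx => h.symm.trans hx, fun hx => h.trans hx⟩

/-- The set of connected component blocks of `g`. -/
noncomputable def comps (g : SimpleGraph V) : Finset (Finset V) :=
  Finset.univ.image (fun v => block g v)

lemma block_mem_comps (g : SimpleGraph V) (v : V) : block g v ∈ comps g :=
  Finset.mem_image_of_mem _ (Finset.mem_univ v)

lemma comps_mem_partitions (g : SimpleGraph V) :
    (∀ B ∈ comps g, B.Nonempty) ∧
      ((comps g : Set (Finset V)).PairwiseDisjoint id) ∧
      (comps g).biUnion id = Finset.univ := by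
  refine ⟨?_, ?_, ?_⟩
  · rintro B hB
    obtain ⟨v, -, rfl⟩ := Finset.mem_image.1 hB
    exact ⟨v, self_mem_block g v⟩
  · rintro B hB C hC hne
    obtain ⟨v, -, rfl⟩ := Finset.mem_image.1 hB
    obtain ⟨u, -, rfl⟩ := Finset.mem_image.1 hC
    simp only [Function.onFun, id_eq]
    rw [Finset.disjoint_left]
    intro x hxv hxu
    exact hne (by rw [block_eq_block (mem_block.1 hxv), ← block_eq_block (mem_block.1 hxu)])
  · ext v
    simp only [Finset.mem_biUnion, Finset.mem_univ, iff_true, id]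
    exact ⟨block g v, block_mem_comps g v, self_mem_block g v⟩

lemma eq_of_pairwiseDisjoint {P : Finset (Finset V)}
    (hdisj : (P : Set (Finset V)).PairwiseDisjoint id) {B C : Finset V} {x : V}
    (hB : B ∈ P) (hC : C ∈ P) (hxB : x ∈ B) (hxC : x ∈ C) : B = C := by
  by_contra hne
  exact Finset.disjoint_left.1 (hdisj hB hC hne) hxB hxC

/-- Walk with support in `B` gives reachability in the comap graph. -/
lemma reachable_comap_of_walk {g : SimpleGraph V} {B : Finset V} {a b : V}
    (p : g.Walk a b) (hp : ∀ x ∈ p.support, x ∈ B) (ha : a ∈ B) (hb : b ∈ B) :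
    (g.comap (Subtype.val : {v // v ∈ B} → V)).Reachable ⟨a, ha⟩ ⟨b, hb⟩ := by
  induction p with
  | nil => exact SimpleGraph.Reachable.refl _
  | @cons u c w h q ih =>
    have hc : c ∈ B := hp c (by simp [SimpleGraph.Walk.support_cons])
    have hq : ∀ x ∈ q.support, x ∈ B := fun x hx =>
      hp x (by simp [SimpleGraph.Walk.support_cons, hx])
    have hadj : (g.comap (Subtype.val : {v // v ∈ B} → V)).Adj ⟨u, ha⟩ ⟨c, hc⟩ := h
    exact hadj.reachable.trans (ih hq hc hb)

lemma comap_block_connected (g : SimpleGraph V) (v : V) :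
    (g.comap (Subtype.val : {u // u ∈ block g v} → V)).Connected := by
  rw [SimpleGraph.connected_iff]
  constructor
  · rintro ⟨a, ha⟩ ⟨b, hb⟩
    have hab : g.Reachable a b := (mem_block.1 ha).symm.trans (mem_block.1 hb)
    obtain ⟨p⟩ := hab
    refine reachable_comap_of_walk p (fun x hx => ?_) ha hb
    exact mem_block.2 ((mem_block.1 ha).trans ⟨p.takeUntil x hx⟩)
  · exact ⟨⟨v, self_mem_block g v⟩⟩

/-- Glue a family of graphs on the blocks of `P` into a graph on `V`. -/
def glue (P : Finset (Finset V)) (p : ∀ B ∈ P, SimpleGraph {v // v ∈ B}) :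
    SimpleGraph V where
  Adj x y := ∃ (B : Finset V) (hB : B ∈ P) (hx : x ∈ B) (hy : y ∈ B),
    (p B hB).Adj ⟨x, hx⟩ ⟨y, hy⟩
  symm := by
    constructor
    rintro x y ⟨B, hB, hx, hy, h⟩
    exact ⟨B, hB, hy, hx, h.symm⟩
  loopless := by
    constructor
    rintro x ⟨B, hB, hx, hy, h⟩
    exact h.ne (Subtype.ext rfl)

lemma glue_adj {P : Finset (Finset V)} {p : ∀ B ∈ P, SimpleGraph {v // v ∈ B}} {x y : V} :
    (glue P p).Adj x y ↔ ∃ (B : Finset V) (hB : B ∈ P) (hx : x ∈ B) (hy : y ∈ B),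
      (p B hB).Adj ⟨x, hx⟩ ⟨y, hy⟩ := Iff.rfl


lemma mem_of_glue_reachable {P : Finset (Finset V)} {p : ∀ B ∈ P, SimpleGraph {v // v ∈ B}}
    (hdisj : (P : Set (Finset V)).PairwiseDisjoint id) {B : Finset V} (hB : B ∈ P)
    {a u : V} (ha : a ∈ B) (h : (glue P p).Reachable a u) : u ∈ B := by
  obtain ⟨q⟩ := h
  induction q with
  | nil => exact ha
  | @cons x c w hadj q ih =>
    obtain ⟨C, hC, hx, hc, -⟩ := hadj
    have hBC : B = C := eq_of_pairwiseDisjoint hdisj hB hC ha hx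
    exact ih (hBC ▸ hc)

lemma glue_reachable_of_mem {P : Finset (Finset V)} {p : ∀ B ∈ P, SimpleGraph {v // v ∈ B}}
    {B : Finset V} (hB : B ∈ P) (hconn : (p B hB).Connected)
    {a u : V} (ha : a ∈ B) (hu : u ∈ B) : (glue P p).Reachable a u := by
  have hr : (p B hB).Reachable ⟨a, ha⟩ ⟨u, hu⟩ := hconn.preconnected _ _
  exact hr.map (⟨Subtype.val, fun {x y} h => ⟨B, hB, x.2, y.2, h⟩⟩ : p B hB →g glue P p)

lemma block_glue_eq {P : Finset (Finset V)} {p : ∀ B ∈ P, SimpleGraph {v // v ∈ B}}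
    (hdisj : (P : Set (Finset V)).PairwiseDisjoint id)
    (hconn : ∀ B (hB : B ∈ P), (p B hB).Connected)
    {B : Finset V} (hB : B ∈ P) {x : V} (hx : x ∈ B) : block (glue P p) x = B := by
  ext u
  rw [mem_block]
  exact ⟨fun h => mem_of_glue_reachable hdisj hB hx h,
    fun hu => glue_reachable_of_mem hB (hconn B hB) hx hu⟩

lemma comps_glue {P : Finset (Finset V)} {p : ∀ B ∈ P, SimpleGraph {v // v ∈ B}}
    (hne : ∀ B ∈ P, B.Nonempty)
    (hdisj : (P : Set (Finset V)).PairwiseDisjoint id)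
    (hcover : P.biUnion id = Finset.univ)
    (hconn : ∀ B (hB : B ∈ P), (p B hB).Connected) : comps (glue P p) = P := by
  ext C
  constructor
  · intro hC
    obtain ⟨v, -, rfl⟩ := Finset.mem_image.1 hC
    have hv : v ∈ P.biUnion id := by rw [hcover]; exact Finset.mem_univ v
    obtain ⟨B, hB, hvB⟩ := Finset.mem_biUnion.1 hv
    rw [block_glue_eq hdisj hconn hB hvB]
    exact hB
  · intro hC
    obtain ⟨x, hx⟩ := hne C hC
    rw [← block_glue_eq hdisj hconn hC hx]
    exact block_mem_comps _ x

/-- Splitting: the family of induced graphs on the blocks. -/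
noncomputable def split (g : SimpleGraph V) :
    ∀ B ∈ comps g, SimpleGraph {v // v ∈ B} :=
  fun B _ => g.comap (Subtype.val : {v // v ∈ B} → V)

lemma glue_split {g : SimpleGraph V} {P : Finset (Finset V)} (hP : comps g = P) :
    glue P (fun B (hB : B ∈ P) => g.comap (Subtype.val : {v // v ∈ B} → V)) = g := by
  ext x y
  rw [glue_adj]
  constructor
  · rintro ⟨B, hB, hx, hy, h⟩
    exact h
  · intro h
    refine ⟨block g x, ?_, self_mem_block g x, mem_block.2 h.reachable, h⟩
    rw [← hP]; exact block_mem_comps g x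

lemma split_glue {P : Finset (Finset V)} {p : ∀ B ∈ P, SimpleGraph {v // v ∈ B}}
    (hdisj : (P : Set (Finset V)).PairwiseDisjoint id)
    {B : Finset V} (hB : B ∈ P) :
    (glue P p).comap (Subtype.val : {v // v ∈ B} → V) = p B hB := by
  ext x y
  show (glue P p).Adj x.1 y.1 ↔ _
  rw [glue_adj]
  constructor
  · rintro ⟨C, hC, hx, hy, h⟩
    have hBC : B = C := eq_of_pairwiseDisjoint hdisj hB hC x.2 hx
    subst hBC
    convert h
  · intro h
    exact ⟨B, hB, x.2, y.2, by convert h⟩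


variable {R : Type*} [CommRing R]

lemma lift_map_val {B : Finset V} (F : V → V → R) (hF : ∀ x y, F x y = F y x)
    (e : Sym2 {v // v ∈ B}) :
    Sym2.lift ⟨fun u v : {v // v ∈ B} => F u.1 v.1, fun u v => hF u.1 v.1⟩ e
      = Sym2.lift ⟨F, hF⟩ (Sym2.map Subtype.val e) := by
  induction e using Sym2.ind with
  | _ x y => simp

lemma mem_of_mem_image_edge {B : Finset V} {h : SimpleGraph {v // v ∈ B}} {x y : V}
    (he : s(x, y) ∈ h.edgeFinset.image (Sym2.map Subtype.val)) : x ∈ B ∧ y ∈ B := by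
  obtain ⟨e', -, hmap⟩ := Finset.mem_image.1 he
  induction e' using Sym2.ind with
  | _ u v =>
    rw [Sym2.map_pair_eq, Sym2.eq_iff] at hmap
    rcases hmap with ⟨hux, hvy⟩ | ⟨huy, hvx⟩
    · exact ⟨hux ▸ u.2, hvy ▸ v.2⟩
    · exact ⟨hvx ▸ v.2, huy ▸ u.2⟩

lemma glue_edgeFinset {P : Finset (Finset V)} {p : ∀ B ∈ P, SimpleGraph {v // v ∈ B}} :
    (glue P p).edgeFinset =
      P.attach.biUnion (fun B => ((p B.1 B.2).edgeFinset).image (Sym2.map Subtype.val)) := by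
  ext e
  induction e using Sym2.ind with
  | _ x y =>
    rw [SimpleGraph.mem_edgeFinset, SimpleGraph.mem_edgeSet, Finset.mem_biUnion]
    constructor
    · rintro ⟨B, hB, hx, hy, h⟩
      refine ⟨⟨B, hB⟩, Finset.mem_attach _ _, Finset.mem_image.2
        ⟨s(⟨x, hx⟩, ⟨y, hy⟩), ?_, by rw [Sym2.map_pair_eq]⟩⟩
      rw [SimpleGraph.mem_edgeFinset, SimpleGraph.mem_edgeSet]
      exact h
    · rintro ⟨⟨B, hB⟩, -, hmem⟩
      obtain ⟨e', he', hmap⟩ := Finset.mem_image.1 hmem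
      induction e' using Sym2.ind with
      | _ u v =>
        have hadj : (p B hB).Adj u v := by
          rw [SimpleGraph.mem_edgeFinset, SimpleGraph.mem_edgeSet] at he'
          exact he'
        rw [Sym2.map_pair_eq, Sym2.eq_iff] at hmap
        rcases hmap with ⟨hux, hvy⟩ | ⟨huy, hvx⟩
        · subst hux; subst hvy
          exact ⟨B, hB, u.2, v.2, by convert hadj⟩
        · subst huy; subst hvx
          exact ⟨B, hB, v.2, u.2, by convert hadj.symm⟩

lemma glue_weight {P : Finset (Finset V)} {p : ∀ B ∈ P, SimpleGraph {v // v ∈ B}}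
    (hdisj : (P : Set (Finset V)).PairwiseDisjoint id)
    (F : V → V → R) (hF : ∀ x y, F x y = F y x) :
    ∏ e ∈ (glue P p).edgeFinset, Sym2.lift ⟨F, hF⟩ e
      = ∏ B ∈ P.attach, ∏ e ∈ (p B.1 B.2).edgeFinset,
          Sym2.lift ⟨fun u v : {v // v ∈ B.1} => F u.1 v.1, fun u v => hF u.1 v.1⟩ e := by
  rw [glue_edgeFinset, Finset.prod_biUnion]
  · refine Finset.prod_congr rfl fun B _ => ?_
    rw [Finset.prod_image (fun x _ y _ h => Sym2.map.injective Subtype.val_injective h)]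
    exact Finset.prod_congr rfl fun e _ => (lift_map_val F hF e).symm
  · rintro ⟨B, hB⟩ - ⟨C, hC⟩ - hne
    simp only [Function.onFun]
    rw [Finset.disjoint_left]
    intro e heB heC
    induction e using Sym2.ind with
    | _ x y =>
      have h1 := (mem_of_mem_image_edge heB).1
      have h2 := (mem_of_mem_image_edge heC).1
      exact hne (Subtype.ext (eq_of_pairwiseDisjoint hdisj hB hC h1 h2))

lemma singleton_rho (F : V → V → R) (hF : ∀ x y, F x y = F y x)
    {B : Finset V} (hcard : B.card = 1) :
    ∑ g ∈ Finset.univ.filter (fun g : SimpleGraph {v // v ∈ B} => g.Connected),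
      ∏ e ∈ g.edgeFinset,
        Sym2.lift ⟨fun u v : {v // v ∈ B} => F u.1 v.1, fun u v => hF u.1 v.1⟩ e = 1 := by
  have hcard' : Fintype.card {v // v ∈ B} = 1 := by
    rw [Fintype.card_coe]; exact hcard
  have hsub : Subsingleton {v // v ∈ B} :=
    Fintype.card_le_one_iff_subsingleton.1 (le_of_eq hcard')
  have hnonempty : Nonempty {v // v ∈ B} := Fintype.card_pos_iff.1 (by omega)
  have hfilter : Finset.univ.filter (fun g : SimpleGraph {v // v ∈ B} => g.Connected)
      = {(⊥ : SimpleGraph {v // v ∈ B})} := by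
    ext g
    simp only [Finset.mem_filter, Finset.mem_univ, true_and, Finset.mem_singleton]
    constructor
    · intro _
      ext x y
      simp only [SimpleGraph.bot_adj, iff_false]
      intro h
      exact h.ne (Subsingleton.elim x y)
    · rintro rfl
      rw [SimpleGraph.connected_iff]
      refine ⟨fun x y => ?_, hnonempty⟩
      rw [Subsingleton.elim x y]
  rw [hfilter, Finset.sum_singleton]
  refine Finset.prod_eq_one fun e he => ?_
  exfalso
  simp [SimpleGraph.edgeFinset] at he

end MayerAux


/-- Mayer-expansion factorization into connected components: for a finite set `Λ` and a
symmetric function `F` on pairs of `Λ` with values in a commutative ring,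
`∑_{g ∈ 𝒢_Λ} ∏_{{x,y} ∈ E_g} F_{xy} = ∑_{π ∈ Π(Λ)} ∏_{B ∈ π} ρ(B)`, where `𝒢_Λ` is the set
of all graphs with vertex set `Λ`, `Π(Λ)` is the set of partitions of `Λ` (encoded as finsets
of pairwise-disjoint nonempty blocks with union `Λ`), `ρ(B) = 1` if `|B| = 1`, and
`ρ(B) = ∑_{g ∈ G_B} ∏_{{x,y} ∈ E_g} F_{xy}` if `|B| ≥ 2`, with `G_B` the set of connected
graphs with vertex set `B`. -/
theorem stmt17 {V : Type*} [Fintype V] [DecidableEq V] {R : Type*} [CommRing R]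
    (F : V → V → R) (hF : ∀ x y, F x y = F y x) :
    ∑ g : SimpleGraph V, ∏ e ∈ g.edgeFinset, Sym2.lift ⟨F, hF⟩ e =
      ∑ P ∈ Finset.univ.filter (fun P : Finset (Finset V) =>
          (∀ B ∈ P, B.Nonempty) ∧ (P : Set (Finset V)).PairwiseDisjoint id ∧
            P.biUnion id = Finset.univ),
        ∏ B ∈ P,
          (if B.card = 1 then 1 else
            ∑ g ∈ Finset.univ.filter (fun g : SimpleGraph {v // v ∈ B} => g.Connected),
              ∏ e ∈ g.edgeFinset,
                Sym2.lift ⟨fun u v : {v // v ∈ B} => F u.1 v.1,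
                  fun u v => hF u.1 v.1⟩ e) := by
  have hmap : ∀ g : SimpleGraph V, g ∈ (Finset.univ : Finset (SimpleGraph V)) →
      MayerAux.comps g ∈ Finset.univ.filter (fun P : Finset (Finset V) =>
        (∀ B ∈ P, B.Nonempty) ∧ (P : Set (Finset V)).PairwiseDisjoint id ∧
          P.biUnion id = Finset.univ) := fun g _ =>
    Finset.mem_filter.2 ⟨Finset.mem_univ _, MayerAux.comps_mem_partitions g⟩
  rw [← Finset.sum_fiberwise_of_maps_to hmap]
  refine Finset.sum_congr rfl fun P hP => ?_
  obtain ⟨-, hne, hdisj, hcover⟩ := Finset.mem_filter.1 hP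
  have hifeq : ∀ B ∈ P, (if B.card = 1 then (1 : R) else
      ∑ g ∈ Finset.univ.filter (fun g : SimpleGraph {v // v ∈ B} => g.Connected),
        ∏ e ∈ g.edgeFinset, Sym2.lift ⟨fun u v : {v // v ∈ B} => F u.1 v.1,
          fun u v => hF u.1 v.1⟩ e)
      = ∑ g ∈ Finset.univ.filter (fun g : SimpleGraph {v // v ∈ B} => g.Connected),
        ∏ e ∈ g.edgeFinset, Sym2.lift ⟨fun u v : {v // v ∈ B} => F u.1 v.1,
          fun u v => hF u.1 v.1⟩ e := by
    intro B hB
    split_ifs with h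
    · exact (MayerAux.singleton_rho F hF h).symm
    · rfl
  rw [Finset.prod_congr rfl hifeq, Finset.prod_sum]
  refine Finset.sum_nbij'
    (fun g => fun B (hB : B ∈ P) => g.comap (Subtype.val : {v // v ∈ B} → V))
    (fun p => MayerAux.glue P p) ?_ ?_ ?_ ?_ ?_
  · intro g hg
    have hPg : MayerAux.comps g = P := (Finset.mem_filter.1 hg).2
    rw [Finset.mem_pi]
    intro B hB
    rw [Finset.mem_filter]
    refine ⟨Finset.mem_univ _, ?_⟩
    rw [← hPg] at hB
    obtain ⟨v, -, rfl⟩ := Finset.mem_image.1 hB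
    exact MayerAux.comap_block_connected g v
  · intro p hp
    rw [Finset.mem_filter]
    exact ⟨Finset.mem_univ _, MayerAux.comps_glue hne hdisj hcover
      (fun B hB => (Finset.mem_filter.1 (Finset.mem_pi.1 hp B hB)).2)⟩
  · intro g hg
    exact MayerAux.glue_split (Finset.mem_filter.1 hg).2
  · intro p hp
    funext B hB
    exact MayerAux.split_glue hdisj hB
  · intro g hg
    conv_lhs => rw [← MayerAux.glue_split (Finset.mem_filter.1 hg).2]
    exact MayerAux.glue_weight hdisj F hF
end

section
/- Let d ≥ 1, β ≥ 0, y ∈ ℝ, let R ⊂ ℤ^d be a finite set with |R| = n ≥ 2, and let σ : R → {−1, 0, 1} be a spin configuration. Define V_{uv} = −(σ_u σ_v + y σ_u² σ_v²) δ_{|u−v|,1} and h(y) = d(1+y) if y > −1, h(y) = 0 if y ≤ −1. Then |∑_{g ∈ G_R} ∏_{{u,v} ∈ E_g} (e^{−β V_{uv}} − 1)| ≤ e^{β n h(y)} ∑_{τ ∈ T_R} ∏_{{u,v} ∈ E_τ} (1 − e^{−β(1+|y|) δ_{|u−v|,1}}), where G_R is the set of connected graphs with vertex set R and T_R is the set of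 trees with vertex set R. -/
open scoped Classical

noncomputable section

/-- Kronecker symbol `δ_{|x−z|,1}`. -/
def kron {d : ℕ} (x z : Fin d → ℤ) : ℝ := if dist1 x z = 1 then 1 else 0

lemma kron_comm {d : ℕ} (x z : Fin d → ℤ) : kron x z = kron z x := by
  unfold kron dist1
  congr 1
  · simp only [eq_iff_iff]
    constructor <;> intro h <;>
      simpa [abs_sub_comm] using h

open SimpleGraph
set_option linter.unusedSectionVars false
set_option linter.unusedVariables false

variable {V : Type*} [Fintype V] [DecidableEq V]

/-- Instance-free edge finset. -/
def EF (G : SimpleGraph V) : Finset (Sym2 V) := G.edgeSet.toFinite.toFinset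

lemma mem_EF {G : SimpleGraph V} {e : Sym2 V} : e ∈ EF G ↔ e ∈ G.edgeSet := by
  rw [EF, Set.Finite.mem_toFinset]

lemma EF_eq {G : SimpleGraph V} [i : Fintype G.edgeSet] : EF G = G.edgeFinset := by
  ext e; simp [mem_EF, mem_edgeFinset]

lemma EF_subset_EF {G H : SimpleGraph V} : EF G ⊆ EF H ↔ G ≤ H := by
  rw [EF_eq, EF_eq]; exact edgeFinset_subset_edgeFinset

lemma EF_inj {G H : SimpleGraph V} (h : EF G = EF H) : G = H := by
  rw [EF_eq, EF_eq] at h; exact edgeFinset_inj.mp h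


omit [Fintype V] [DecidableEq V] in
lemma reach_del_of_walk {G : SimpleGraph V} {u v : V}
    (hr : (G \ fromEdgeSet {s(u,v)}).Reachable u v) {x y : V} (p : G.Walk x y) :
    (G \ fromEdgeSet {s(u,v)}).Reachable x y := by
  induction p with
  | nil => exact Reachable.refl _
  | @cons a b c h q ih =>
    refine Reachable.trans ?_ ih
    by_cases he : s(a,b) = s(u,v)
    · rw [Sym2.eq_iff] at he
      rcases he with ⟨rfl, rfl⟩ | ⟨rfl, rfl⟩
      · exact hr
      · exact hr.symm
    · exact Adj.reachable (by simp [sdiff_adj, h, he, fromEdgeSet_adj])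

omit [DecidableEq V] in
lemma exists_spanning_tree (G : SimpleGraph V) (hG : G.Connected) :
    ∃ t ≤ G, t.IsTree := by
  obtain ⟨m, hm⟩ : ∃ m, G.edgeSet.ncard = m := ⟨_, rfl⟩
  induction m using Nat.strong_induction_on generalizing G with
  | _ m ih =>
    by_cases hac : G.IsAcyclic
    · exact ⟨G, le_refl _, ⟨hG, hac⟩⟩
    · simp only [IsAcyclic, not_forall, not_not] at hac
      obtain ⟨v, c, hc⟩ := hac
      have hne : c.edges ≠ [] := by
        intro h
        have h3 := hc.three_le_length
        have h4 : c.edges.length = c.length := c.length_edges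
        rw [h] at h4
        simp at h4
        omega
      obtain ⟨e, he⟩ := List.exists_mem_of_ne_nil _ hne
      induction e using Sym2.ind with
      | _ a b =>
      have hcyc : ∃ (u : V) (p : G.Walk u u), p.IsCycle ∧ s(a,b) ∈ p.edges := ⟨v, c, hc, he⟩
      rw [← adj_and_reachable_delete_edges_iff_exists_cycle] at hcyc
      obtain ⟨hadj, hreach⟩ := hcyc
      set G' := G \ fromEdgeSet {s(a,b)} with hG'
      have hconn' : G'.Connected := by
        have : Nonempty V := hG.nonempty
        refine Connected.mk fun x y => ?_
        obtain ⟨p⟩ := hG.preconnected x y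
        exact reach_del_of_walk hreach p
      have hEd : G'.edgeSet = G.edgeSet \ {s(a,b)} := by
        ext f
        simp only [hG', edgeSet_sdiff, edgeSet_fromEdgeSet, Set.mem_diff,
          Set.mem_singleton_iff, Set.mem_setOf_eq]
        constructor
        · rintro ⟨hf, hf2⟩
          refine ⟨hf, fun h => hf2 ⟨h, ?_⟩⟩
          subst h; exact G.not_isDiag_of_mem_edgeSet hf
        · rintro ⟨h1, h2⟩
          exact ⟨h1, fun hh => h2 hh.1⟩
      have hcard : G'.edgeSet.ncard < m := by
        rw [hEd, ← hm]
        exact Set.ncard_diff_singleton_lt_of_mem (by simpa using hadj) (Set.toFinite _)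
      obtain ⟨t, ht, htt⟩ := ih _ hcard G' hconn' rfl
      exact ⟨t, le_trans ht sdiff_le, htt⟩


omit [Fintype V] [DecidableEq V] in
lemma side_total {τ : SimpleGraph V} {u v x y : V} (p : τ.Walk x y)
    (hyu : (τ \ fromEdgeSet {s(u,v)}).Reachable y u ∨ (τ \ fromEdgeSet {s(u,v)}).Reachable y v) :
    (τ \ fromEdgeSet {s(u,v)}).Reachable x u ∨ (τ \ fromEdgeSet {s(u,v)}).Reachable x v := by
  induction p with
  | nil => exact hyu
  | @cons a b c h q ih =>
    rcases ih hyu with hb | hb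
    · by_cases he : s(a,b) = s(u,v)
      · rw [Sym2.eq_iff] at he
        rcases he with ⟨rfl, rfl⟩ | ⟨rfl, rfl⟩
        · exact Or.inl (Reachable.refl _)
        · exact Or.inr (Reachable.refl _)
      · exact Or.inl ((Adj.reachable (by simp [sdiff_adj, h, he, fromEdgeSet_adj])).trans hb)
    · by_cases he : s(a,b) = s(u,v)
      · rw [Sym2.eq_iff] at he
        rcases he with ⟨rfl, rfl⟩ | ⟨rfl, rfl⟩
        · exact Or.inl (Reachable.refl _)
        · exact Or.inr (Reachable.refl _)
      · exact Or.inr ((Adj.reachable (by simp [sdiff_adj, h, he, fromEdgeSet_adj])).trans hb)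

omit [Fintype V] [DecidableEq V] in
/-- C3: deleting a tree edge separates its endpoints. -/
lemma tree_not_reach {τ : SimpleGraph V} (hτ : τ.IsAcyclic) {u v : V}
    (he : s(u,v) ∈ τ.edgeSet) : ¬ (τ \ fromEdgeSet {s(u,v)}).Reachable u v := by
  have := (isAcyclic_iff_forall_edge_isBridge.mp hτ) he
  rw [isBridge_iff] at this
  exact this

omit [Fintype V] [DecidableEq V] in
/-- C4: a walk between vertices on opposite sides of a cut crosses it. -/
lemma walk_cross {G : SimpleGraph V} (P : V → Prop) {a b : V} (p : G.Walk a b)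
    (ha : P a) (hb : ¬ P b) : ∃ c d, s(c,d) ∈ p.edges ∧ G.Adj c d ∧ P c ∧ ¬ P d := by
  induction p with
  | nil => exact absurd ha hb
  | @cons x z c h q ih =>
    by_cases hz : P z
    · obtain ⟨c', d', h1, h2, h3, h4⟩ := ih hz hb
      exact ⟨c', d', by simp [h1], h2, h3, h4⟩
    · exact ⟨x, z, by simp, h, ha, hz⟩

omit [Fintype V] [DecidableEq V] in
/-- C6: an edge of a tree crossing the cut of edge `s(u,v)` is `s(u,v)` itself. -/
lemma tree_cross_eq {τ : SimpleGraph V} {u v c d : V}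
    (hf : τ.Adj c d) (hc : (τ \ fromEdgeSet {s(u,v)}).Reachable c u)
    (hd : ¬ (τ \ fromEdgeSet {s(u,v)}).Reachable d u) : s(c,d) = s(u,v) := by
  by_contra hne
  have hadj : (τ \ fromEdgeSet {s(u,v)}).Adj c d := by
    simp [sdiff_adj, hf, fromEdgeSet_adj, hne]
  exact hd ((hadj.symm.reachable).trans hc)

omit [Fintype V] [DecidableEq V] in
/-- C5: if `f` lies on the (unique) path joining `u v` in an acyclic graph, then deleting `f`
separates `u` and `v`. -/
lemma path_not_reach {τ : SimpleGraph V} (hτ : τ.IsAcyclic) {u v : V} {f : Sym2 V}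
    (p : τ.Walk u v) (hp : p.IsPath) (hf : f ∈ p.edges) :
    ¬ (τ \ fromEdgeSet {f}).Reachable u v := by
  rintro ⟨q⟩
  have hfe : f ∈ τ.edgeSet := p.edges_subset_edgeSet hf
  have hfd : ¬ f.IsDiag := τ.not_isDiag_of_mem_edgeSet hfe
  classical
  let q' : τ.Walk u v := q.map (Hom.ofLE sdiff_le)
  have hmapid : Sym2.map ⇑(Hom.ofLE (sdiff_le : τ \ fromEdgeSet {f} ≤ τ)) = id := by
    funext e
    induction e using Sym2.ind with
    | _ a b => simp [Hom.ofLE_apply]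
  have hq'e : q'.edges = q.edges := by
    show (q.map _).edges = q.edges
    rw [Walk.edges_map, hmapid, List.map_id]
  have hfq : f ∉ q.edges := by
    intro hmem
    have := q.edges_subset_edgeSet hmem
    rw [edgeSet_sdiff, edgeSet_fromEdgeSet] at this
    simp [hfd] at this
  have huniq := hτ.path_unique ⟨p, hp⟩ q'.toPath
  have hpe : p = (q'.toPath : τ.Walk u v) := congrArg Subtype.val huniq
  rw [hpe] at hf
  exact hfq (hq'e ▸ Walk.edges_toPath_subset q' hf)

lemma EF_card_tree {τ : SimpleGraph V} (hτ : τ.IsTree) : (EF τ).card + 1 = Fintype.card V := by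
  rw [EF_eq]; exact hτ.card_edgeFinset

lemma edgeSet_del {G : SimpleGraph V} {f : Sym2 V} (hf : f ∈ G.edgeSet) :
    (G \ fromEdgeSet {f}).edgeSet = G.edgeSet \ {f} := by
  have hfd : ¬ f.IsDiag := G.not_isDiag_of_mem_edgeSet hf
  ext e
  rw [edgeSet_sdiff, edgeSet_fromEdgeSet]
  constructor
  · rintro ⟨h1, h2⟩
    refine ⟨h1, fun h => h2 ⟨h, ?_⟩⟩
    rw [Set.mem_singleton_iff] at h
    subst h
    exact hfd
  · rintro ⟨h1, h2⟩
    exact ⟨h1, fun hh => h2 hh.1⟩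

lemma tree_of_connected_card {G : SimpleGraph V} (hG : G.Connected)
    (hcard : (EF G).card + 1 = Fintype.card V) : G.IsTree := by
  obtain ⟨t, ht, htt⟩ := exists_spanning_tree G hG
  have h1 : EF t ⊆ EF G := EF_subset_EF.mpr ht
  have h2 := EF_card_tree htt
  have h3 : EF t = EF G := Finset.eq_of_subset_of_card_le h1 (by omega)
  rwa [EF_inj h3] at htt

/-- Exchange: replacing a path edge `s(a,b)` of the tree `τ` by the chord `s(u,v)` yields a
tree. -/
lemma exchange_tree {τ : SimpleGraph V} (hτ : τ.IsTree) {u v a b : V}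
    (huv : u ≠ v) (he : s(u,v) ∉ τ.edgeSet) (hab : s(a,b) ∈ τ.edgeSet)
    (p : τ.Walk u v) (hp : p.IsPath) (hfp : s(a,b) ∈ p.edges) :
    ((τ \ fromEdgeSet {s(a,b)}) ⊔ fromEdgeSet {s(u,v)}).IsTree ∧
      EF ((τ \ fromEdgeSet {s(a,b)}) ⊔ fromEdgeSet {s(u,v)})
        = insert s(u,v) ((EF τ).erase s(a,b)) := by
  set H := τ \ fromEdgeSet {s(a,b)} with hH
  set τ' := H ⊔ fromEdgeSet {s(u,v)} with hτ'
  have hHle : H ≤ τ' := le_sup_left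
  have hadjuv : τ'.Adj u v := by
    rw [hτ', sup_adj]
    right
    rw [fromEdgeSet_adj]
    exact ⟨rfl, huv⟩
  have hsep : ¬ H.Reachable u v := path_not_reach hτ.IsAcyclic p hp hfp
  have hside : ∀ x : V, H.Reachable x a ∨ H.Reachable x b := by
    intro x
    obtain ⟨q⟩ := hτ.isConnected.preconnected x a
    exact side_total q (Or.inl (Reachable.refl _))
  have hside' : ∀ x : V, H.Reachable x u ∨ H.Reachable x v := by
    have hu := hside u
    have hv := hside v
    have hne : ¬ (H.Reachable u a ∧ H.Reachable v a) := by
      rintro ⟨h1, h2⟩; exact hsep (h1.trans h2.symm)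
    have hne' : ¬ (H.Reachable u b ∧ H.Reachable v b) := by
      rintro ⟨h1, h2⟩; exact hsep (h1.trans h2.symm)
    intro x
    rcases hside x with hx | hx
    · rcases hu with hu' | hu'
      · exact Or.inl (hx.trans hu'.symm)
      · rcases hv with hv' | hv'
        · exact Or.inr (hx.trans hv'.symm)
        · exact absurd ⟨hu', hv'⟩ hne'
    · rcases hu with hu' | hu'
      · rcases hv with hv' | hv'
        · exact absurd ⟨hu', hv'⟩ hne
        · exact Or.inr (hx.trans hv'.symm)
      · exact Or.inl (hx.trans hu'.symm)
  have hconn : τ'.Connected := by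
    have : Nonempty V := hτ.isConnected.nonempty
    refine Connected.mk fun x y => ?_
    have hxy : ∀ z : V, τ'.Reachable z u := by
      intro z
      rcases hside' z with hz | hz
      · exact hz.mono hHle
      · exact (hz.mono hHle).trans hadjuv.symm.reachable
    exact (hxy x).trans (hxy y).symm
  have hE : τ'.edgeSet = (τ.edgeSet \ {s(a,b)}) ∪ {s(u,v)} := by
    rw [hτ', edgeSet_sup, hH, edgeSet_del hab, edgeSet_fromEdgeSet]
    have h5 : ({s(u,v)} : Set (Sym2 V)) \ Sym2.diagSet = {s(u,v)} := by
      ext e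
      simp only [Set.mem_diff, Set.mem_singleton_iff, Sym2.mem_diagSet, and_iff_left_iff_imp]
      rintro rfl
      simpa using huv
    rw [h5]
  have hEF : EF τ' = insert s(u,v) ((EF τ).erase s(a,b)) := by
    ext e
    rw [mem_EF, hE]
    simp only [Set.mem_union, Set.mem_diff, Set.mem_singleton_iff, Finset.mem_insert,
      Finset.mem_erase, mem_EF]
    tauto
  have hcard : (EF τ').card + 1 = Fintype.card V := by
    rw [hEF]
    rw [Finset.card_insert_of_notMem (by simp [mem_EF, he])]
    rw [Finset.card_erase_of_mem (mem_EF.mpr hab)]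
    have h6 := EF_card_tree hτ
    have hpos : 0 < (EF τ).card := by
      rw [Finset.card_pos]
      exact ⟨s(a,b), mem_EF.mpr hab⟩
    omega
  exact ⟨tree_of_connected_card hconn hcard, hEF⟩

section Scheme

variable (rank : Sym2 V → ℕ)

/-- total weight of a graph's edges, with injective powers of two as edge weights. -/
def Wt (G : SimpleGraph V) : ℕ := ∑ e ∈ EF G, 2 ^ (rank e)

/-- `e` is a "good" chord for the tree `τ` : every edge on the `τ`-path joining its endpoints
has smaller rank. -/
def goodEdge (τ : SimpleGraph V) (e : Sym2 V) : Prop :=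
  ∀ u v : V, s(u,v) = e → ∀ p : τ.Walk u v, p.IsPath → ∀ f ∈ p.edges, rank f < rank e

/-- The set of good chords of `τ`. -/
def NEdges (τ : SimpleGraph V) : Finset (Sym2 V) :=
  Finset.univ.filter (fun e => ¬ e.IsDiag ∧ e ∉ EF τ ∧ goodEdge rank τ e)

lemma mem_NEdges {τ : SimpleGraph V} {e : Sym2 V} :
    e ∈ NEdges rank τ ↔ ¬ e.IsDiag ∧ e ∉ EF τ ∧ goodEdge rank τ e := by
  simp [NEdges]

lemma exists_good_tree (hrank : Function.Injective rank) (g : SimpleGraph V)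
    (hg : g.Connected) :
    ∃ τ : SimpleGraph V, τ.IsTree ∧ τ ≤ g ∧ EF g ⊆ EF τ ∪ NEdges rank τ := by
  have hST : (Finset.univ.filter (fun t : SimpleGraph V => t.IsTree ∧ t ≤ g)).Nonempty := by
    obtain ⟨t, h1, h2⟩ := exists_spanning_tree g hg
    exact ⟨t, by simp [h2, h1]⟩
  obtain ⟨τ, hτmem, hmin⟩ := Finset.exists_min_image _ (Wt rank) hST
  rw [Finset.mem_filter] at hτmem
  obtain ⟨-, hτtree, hτle⟩ := hτmem
  refine ⟨τ, hτtree, hτle, ?_⟩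
  intro e he
  by_cases heτ : e ∈ EF τ
  · exact Finset.mem_union_left _ heτ
  refine Finset.mem_union_right _ (mem_NEdges rank |>.mpr ⟨?_, heτ, ?_⟩)
  · exact g.not_isDiag_of_mem_edgeSet (mem_EF.mp he)
  · rintro u v rfl p hp f hf
    induction f using Sym2.ind with
    | _ a b =>
    have hfτ : s(a,b) ∈ τ.edgeSet := p.edges_subset_edgeSet hf
    by_contra hnot
    push_neg at hnot
    have hne : s(a,b) ≠ s(u,v) := by
      intro h; rw [h] at hfτ; exact heτ (mem_EF.mpr hfτ)
    have hlt : rank s(u,v) < rank s(a,b) :=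
      lt_of_le_of_ne hnot (fun h => hne (hrank h.symm))
    have huv : u ≠ v := by
      intro h
      apply g.not_isDiag_of_mem_edgeSet (mem_EF.mp he)
      subst h; simp
    have heτ' : s(u,v) ∉ τ.edgeSet := fun h => heτ (mem_EF.mpr h)
    obtain ⟨htree', hEF'⟩ := exchange_tree hτtree huv heτ' hfτ p hp hf
    set τ' := (τ \ fromEdgeSet {s(a,b)}) ⊔ fromEdgeSet {s(u,v)} with hτ'
    have hle' : τ' ≤ g := by
      rw [hτ']
      refine sup_le (le_trans sdiff_le hτle) ?_
      intro x y hxy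
      rw [fromEdgeSet_adj] at hxy
      rw [Set.mem_singleton_iff] at hxy
      have : s(x,y) ∈ g.edgeSet := by rw [hxy.1]; exact mem_EF.mp he
      exact (SimpleGraph.mem_edgeSet g).mp this
    have hW : Wt rank τ' < Wt rank τ := by
      have hfm : s(a,b) ∈ EF τ := mem_EF.mpr hfτ
      have hem : s(u,v) ∉ (EF τ).erase s(a,b) := by
        simp [Finset.mem_erase, heτ]
      have h1 : Wt rank τ' = 2 ^ rank s(u,v) + ∑ e ∈ (EF τ).erase s(a,b), 2 ^ rank e := by
        rw [Wt, hEF', Finset.sum_insert hem]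
      have h2 : Wt rank τ = 2 ^ rank s(a,b) + ∑ e ∈ (EF τ).erase s(a,b), 2 ^ rank e := by
        rw [Wt, ← Finset.add_sum_erase _ _ hfm]
      rw [h1, h2]
      have : (2:ℕ) ^ rank s(u,v) < 2 ^ rank s(a,b) :=
        Nat.pow_lt_pow_right (by norm_num) hlt
      omega
    have : τ' ∈ Finset.univ.filter (fun t : SimpleGraph V => t.IsTree ∧ t ≤ g) := by
      simp [htree', hle']
    exact absurd (hmin τ' this) (by omega)

end Scheme

section Unique

variable (rank : Sym2 V → ℕ)

lemma good_tree_aux {g τ₁ τ₂ : SimpleGraph V}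
    (h₁ : τ₁.IsTree ∧ τ₁ ≤ g ∧ EF g ⊆ EF τ₁ ∪ NEdges rank τ₁)
    (h₂ : τ₂.IsTree ∧ τ₂ ≤ g ∧ EF g ⊆ EF τ₂ ∪ NEdges rank τ₂)
    {e : Sym2 V} (he₂ : e ∈ EF τ₂) (he₁ : e ∉ EF τ₁) : False := by
  obtain ⟨ht₁, hle₁, hsub₁⟩ := h₁
  obtain ⟨ht₂, hle₂, hsub₂⟩ := h₂
  induction e using Sym2.ind with
  | _ u v =>
  have heg : s(u,v) ∈ EF g := (EF_subset_EF.mpr hle₂) he₂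
  have heN₁ : s(u,v) ∈ NEdges rank τ₁ := by
    rcases Finset.mem_union.mp (hsub₁ heg) with h | h
    · exact absurd h he₁
    · exact h
  have hgood₁ := (mem_NEdges rank |>.mp heN₁).2.2
  have heτ₂ : s(u,v) ∈ τ₂.edgeSet := mem_EF.mp he₂
  -- the cut of τ₂ along e
  have hSu : (τ₂ \ fromEdgeSet {s(u,v)}).Reachable u u := Reachable.refl _
  have hSv : ¬ (τ₂ \ fromEdgeSet {s(u,v)}).Reachable v u := by
    intro h
    exact tree_not_reach ht₂.IsAcyclic heτ₂ h.symm
  -- the τ₁-path from u to v crosses the cut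
  obtain ⟨p, hp, -⟩ := ht₁.existsUnique_path u v
  obtain ⟨c, d, hcd, hadj₁, hSc, hSd⟩ :=
    walk_cross (fun x => (τ₂ \ fromEdgeSet {s(u,v)}).Reachable x u) p hSu hSv
  have hlt1 : rank s(c,d) < rank s(u,v) := hgood₁ u v rfl p hp _ hcd
  have hfτ₂ : s(c,d) ∉ EF τ₂ := by
    intro hmem
    have hcross := tree_cross_eq ((SimpleGraph.mem_edgeSet τ₂).mp (mem_EF.mp hmem)) hSc hSd
    rw [hcross] at hlt1
    exact lt_irrefl _ hlt1
  have hfg : s(c,d) ∈ EF g :=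
    (EF_subset_EF.mpr hle₁) (mem_EF.mpr ((SimpleGraph.mem_edgeSet τ₁).mpr hadj₁))
  have hfN₂ : s(c,d) ∈ NEdges rank τ₂ := by
    rcases Finset.mem_union.mp (hsub₂ hfg) with h | h
    · exact absurd h hfτ₂
    · exact h
  have hgood₂ := (mem_NEdges rank |>.mp hfN₂).2.2
  obtain ⟨q, hq, -⟩ := ht₂.existsUnique_path c d
  obtain ⟨c', d', hcd', hadj₂, hSc', hSd'⟩ :=
    walk_cross (fun x => (τ₂ \ fromEdgeSet {s(u,v)}).Reachable x u) q hSc hSd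
  have hcross2 : s(c',d') = s(u,v) := tree_cross_eq hadj₂ hSc' hSd'
  have hlt2 : rank s(c',d') < rank s(c,d) := hgood₂ c d rfl q hq _ hcd'
  rw [hcross2] at hlt2
  exact absurd hlt1 (not_lt.mpr (le_of_lt hlt2))

lemma good_tree_unique {g τ₁ τ₂ : SimpleGraph V}
    (h₁ : τ₁.IsTree ∧ τ₁ ≤ g ∧ EF g ⊆ EF τ₁ ∪ NEdges rank τ₁)
    (h₂ : τ₂.IsTree ∧ τ₂ ≤ g ∧ EF g ⊆ EF τ₂ ∪ NEdges rank τ₂) : τ₁ = τ₂ := by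
  by_contra hne
  have hEF : EF τ₁ ≠ EF τ₂ := fun h => hne (EF_inj h)
  rcases Finset.not_subset.mp (fun hsub => hEF (Finset.Subset.antisymm hsub
    (fun e he => by
      by_contra he1
      exact good_tree_aux rank h₁ h₂ he he1))) with ⟨e, he1, he2⟩
  exact good_tree_aux rank h₂ h₁ he1 he2

end Unique

section Partition

variable (rank : Sym2 V → ℕ) (hrank : Function.Injective rank)

/-- The Penrose-type map sending a connected graph to its minimal spanning tree. -/
def pimap (g : SimpleGraph V) : SimpleGraph V :=
  if h : g.Connected then (exists_good_tree rank hrank g h).choose else ⊥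

lemma pimap_spec {g : SimpleGraph V} (h : g.Connected) :
    (pimap rank hrank g).IsTree ∧ pimap rank hrank g ≤ g ∧
      EF g ⊆ EF (pimap rank hrank g) ∪ NEdges rank (pimap rank hrank g) := by
  rw [pimap, dif_pos h]
  exact (exists_good_tree rank hrank g h).choose_spec

lemma pimap_eq_iff {g τ : SimpleGraph V} (h : g.Connected) :
    pimap rank hrank g = τ ↔ (τ.IsTree ∧ τ ≤ g ∧ EF g ⊆ EF τ ∪ NEdges rank τ) := by
  constructor
  · rintro rfl; exact pimap_spec rank hrank h
  · intro hτ
    exact good_tree_unique rank (pimap_spec rank hrank h) hτ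

lemma EF_fromEdgeSet_of_nondiag {F : Finset (Sym2 V)} (hF : ∀ e ∈ F, ¬ e.IsDiag) :
    EF (fromEdgeSet (F : Set (Sym2 V))) = F := by
  ext e
  rw [mem_EF, edgeSet_fromEdgeSet]
  constructor
  · rintro ⟨h1, -⟩; exact_mod_cast h1
  · intro h
    exact ⟨by exact_mod_cast h, fun hd => hF e h hd⟩

lemma nondiag_of_mem_EF {G : SimpleGraph V} {e : Sym2 V} (h : e ∈ EF G) : ¬ e.IsDiag :=
  G.not_isDiag_of_mem_edgeSet (mem_EF.mp h)

theorem partition_identity (hrank : Function.Injective rank) (w : Sym2 V → ℝ) :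
    ∑ g ∈ Finset.univ.filter (fun g : SimpleGraph V => g.Connected), ∏ e ∈ EF g, w e
      = ∑ τ ∈ Finset.univ.filter (fun τ : SimpleGraph V => τ.IsTree),
          (∏ e ∈ EF τ, w e) * ∏ e ∈ NEdges rank τ, (1 + w e) := by
  rw [← Finset.sum_fiberwise_of_maps_to (g := pimap rank hrank)
      (t := Finset.univ.filter (fun τ : SimpleGraph V => τ.IsTree))
      (fun g hg => by
        rw [Finset.mem_filter] at hg ⊢
        exact ⟨Finset.mem_univ _, (pimap_spec rank hrank hg.2).1⟩)
      (fun g => ∏ e ∈ EF g, w e)]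
  refine Finset.sum_congr rfl fun τ hτmem => ?_
  rw [Finset.mem_filter] at hτmem
  have hτ : τ.IsTree := hτmem.2
  have hNdisj : Disjoint (EF τ) (NEdges rank τ) := by
    rw [Finset.disjoint_left]
    intro e he hN
    exact (mem_NEdges rank |>.mp hN).2.1 he
  have hfiber : ∀ g : SimpleGraph V,
      (g ∈ (Finset.univ.filter (fun g : SimpleGraph V => g.Connected)).filter
        (fun g => pimap rank hrank g = τ))
      ↔ (EF τ ⊆ EF g ∧ EF g ⊆ EF τ ∪ NEdges rank τ) := by
    intro g
    simp only [Finset.mem_filter, Finset.mem_univ, true_and]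
    constructor
    · rintro ⟨hc, hpi⟩
      have := (pimap_eq_iff rank hrank hc).mp hpi
      exact ⟨EF_subset_EF.mpr this.2.1, this.2.2⟩
    · rintro ⟨h1, h2⟩
      have hle : τ ≤ g := EF_subset_EF.mp h1
      have hc : g.Connected := hτ.isConnected.mono hle
      exact ⟨hc, (pimap_eq_iff rank hrank hc).mpr ⟨hτ, hle, h2⟩⟩
  rw [Finset.sum_nbij' (i := fun g => EF g \ EF τ)
      (j := fun S => fromEdgeSet ((EF τ ∪ S : Finset (Sym2 V)) : Set (Sym2 V)))
      (t := (NEdges rank τ).powerset)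
      (g := fun S => ∏ e ∈ EF τ ∪ S, w e)
      (by
        intro g hg
        rw [hfiber] at hg
        rw [Finset.mem_powerset]
        intro e he
        rw [Finset.mem_sdiff] at he
        rcases Finset.mem_union.mp (hg.2 he.1) with h | h
        · exact absurd h he.2
        · exact h)
      (by
        intro S hS
        rw [Finset.mem_powerset] at hS
        rw [hfiber]
        have hnd : ∀ e ∈ EF τ ∪ S, ¬ e.IsDiag := by
          intro e he
          rcases Finset.mem_union.mp he with h | h
          · exact nondiag_of_mem_EF h
          · exact (mem_NEdges rank |>.mp (hS h)).1
        rw [EF_fromEdgeSet_of_nondiag hnd]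
        exact ⟨Finset.subset_union_left, Finset.union_subset_union_right hS⟩)
      (by
        intro g hg
        rw [hfiber] at hg
        rw [Finset.union_sdiff_of_subset hg.1]
        have : ((EF g : Finset (Sym2 V)) : Set (Sym2 V)) = g.edgeSet := by
          rw [EF]; exact Set.Finite.coe_toFinset _
        rw [this, fromEdgeSet_edgeSet])
      (by
        intro S hS
        rw [Finset.mem_powerset] at hS
        have hnd : ∀ e ∈ EF τ ∪ S, ¬ e.IsDiag := by
          intro e he
          rcases Finset.mem_union.mp he with h | h
          · exact nondiag_of_mem_EF h
          · exact (mem_NEdges rank |>.mp (hS h)).1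
        rw [EF_fromEdgeSet_of_nondiag hnd]
        exact Finset.union_sdiff_cancel_left
          (Finset.disjoint_of_subset_right hS hNdisj))
      (by
        intro g hg
        rw [hfiber] at hg
        rw [Finset.union_sdiff_of_subset hg.1])]
  -- now sum over subsets of NEdges
  have hdisj : ∀ S ∈ (NEdges rank τ).powerset, Disjoint (EF τ) S := fun S hS =>
    Finset.disjoint_of_subset_right (Finset.mem_powerset.mp hS) hNdisj
  calc ∑ S ∈ (NEdges rank τ).powerset, ∏ e ∈ EF τ ∪ S, w e
      = ∑ S ∈ (NEdges rank τ).powerset, (∏ e ∈ EF τ, w e) * ∏ e ∈ S, w e := by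
        refine Finset.sum_congr rfl fun S hS => ?_
        rw [Finset.prod_union (hdisj S hS)]
    _ = (∏ e ∈ EF τ, w e) * ∑ S ∈ (NEdges rank τ).powerset, ∏ e ∈ S, w e := by
        rw [Finset.mul_sum]
    _ = (∏ e ∈ EF τ, w e) * ∏ e ∈ NEdges rank τ, (1 + w e) := by
        congr 1
        have := Finset.prod_add w (fun _ => (1:ℝ)) (NEdges rank τ)
        simp only [Finset.prod_const_one, mul_one] at this
        rw [← this]
        exact Finset.prod_congr rfl fun e _ => by ring

end Partition


lemma dist1_one {d : ℕ} {u v : Fin d → ℤ} (h : dist1 u v = 1) :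
    ∃ i, |u i - v i| = 1 ∧ ∀ j, j ≠ i → u j = v j := by
  have hex : ∃ i, u i ≠ v i := by
    by_contra h'
    push_neg at h'
    have : dist1 u v = 0 := by
      rw [dist1]
      exact Finset.sum_eq_zero fun i _ => by rw [h' i]; simp
    omega
  obtain ⟨i, hi⟩ := hex
  have h1 : (1:ℤ) ≤ |u i - v i| := Int.one_le_abs (sub_ne_zero.mpr hi)
  have hsplit : dist1 u v = |u i - v i| + ∑ j ∈ Finset.univ.erase i, |u j - v j| := by
    rw [dist1, ← Finset.add_sum_erase _ _ (Finset.mem_univ i)]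
  have hrest0 : ∑ j ∈ Finset.univ.erase i, |u j - v j| = 0 ∧ |u i - v i| = 1 := by
    have hrest : 0 ≤ ∑ j ∈ Finset.univ.erase i, |u j - v j| :=
      Finset.sum_nonneg fun j _ => abs_nonneg _
    constructor <;> omega
  refine ⟨i, hrest0.2, fun j hj => ?_⟩
  have := (Finset.sum_eq_zero_iff_of_nonneg fun j _ => abs_nonneg (u j - v j)).mp hrest0.1
    j (Finset.mem_erase.mpr ⟨hj, Finset.mem_univ j⟩)
  have := abs_eq_zero.mp this
  omega

section Counting

variable {d : ℕ} {R : Finset (Fin d → ℤ)}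

/-- The nearest-neighbour graph on `R`. -/
def NNg (R : Finset (Fin d → ℤ)) : SimpleGraph {v // v ∈ R} where
  Adj u v := dist1 u.1 v.1 = 1
  symm := by
    constructor
    intro u v h
    rw [dist1] at h ⊢
    rw [show ∑ i, |v.1 i - u.1 i| = ∑ i, |u.1 i - v.1 i| from
      Finset.sum_congr rfl fun i _ => abs_sub_comm _ _]
    exact h
  loopless := by
    constructor
    intro u h
    rw [dist1] at h
    simp at h

lemma NNg_degree_le (hd : 1 ≤ d) (u : {v // v ∈ R}) : (NNg R).degree u ≤ 2 * d := by
  rw [degree]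
  have : ((NNg R).neighborFinset u).card ≤ (Finset.univ : Finset (Fin d × Bool)).card := by
    apply Finset.card_le_card_of_injOn
      (fun v => if h : dist1 u.1 v.1 = 1
        then ((dist1_one h).choose, decide (u.1 (dist1_one h).choose < v.1 (dist1_one h).choose))
        else (⟨0, hd⟩, false))
    · intro v hv
      exact Finset.mem_univ _
    · intro v₁ hv₁ v₂ hv₂ heq
      have h₁ : dist1 u.1 v₁.1 = 1 := by
        have := Finset.mem_coe.mp hv₁
        rw [mem_neighborFinset] at this; exact this
      have h₂ : dist1 u.1 v₂.1 = 1 := by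
        have := Finset.mem_coe.mp hv₂
        rw [mem_neighborFinset] at this; exact this
      simp only [dif_pos h₁, dif_pos h₂] at heq
      obtain ⟨hi1, hrest1⟩ := (dist1_one h₁).choose_spec
      obtain ⟨hi2, hrest2⟩ := (dist1_one h₂).choose_spec
      set i₁ := (dist1_one h₁).choose
      set i₂ := (dist1_one h₂).choose
      have hii : i₁ = i₂ := congrArg Prod.fst heq
      have hbb : decide (u.1 i₁ < v₁.1 i₁) = decide (u.1 i₂ < v₂.1 i₂) :=
        congrArg Prod.snd heq
      rw [← hii] at hi2 hrest2 hbb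
      have hbb2 : (u.1 i₁ < v₁.1 i₁) ↔ (u.1 i₁ < v₂.1 i₁) := by
        constructor <;> intro h <;> simp_all
      apply Subtype.ext
      funext j
      by_cases hj : j = i₁
      · subst hj
        rcases abs_eq (by norm_num : (0:ℤ) ≤ 1) |>.mp hi1 with hc1 | hc1 <;>
          rcases abs_eq (by norm_num : (0:ℤ) ≤ 1) |>.mp hi2 with hc2 | hc2 <;>
            omega
      · rw [← hrest1 j hj, ← hrest2 j hj]
  simpa [mul_comm] using this

lemma card_NN_le (hd : 1 ≤ d) : (EF (NNg R)).card ≤ d * R.card := by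
  have h2 := (NNg R).sum_degrees_eq_twice_card_edges
  have hdeg : ∑ v : {v // v ∈ R}, (NNg R).degree v ≤ (Fintype.card {v // v ∈ R}) * (2 * d) := by
    calc ∑ v : {v // v ∈ R}, (NNg R).degree v ≤ ∑ _v : {v // v ∈ R}, 2 * d :=
          Finset.sum_le_sum fun v _ => NNg_degree_le hd v
      _ = (Fintype.card {v // v ∈ R}) * (2 * d) := by
          rw [Finset.sum_const, smul_eq_mul, Fintype.card]
  rw [EF_eq]
  have hcard : Fintype.card {v // v ∈ R} = R.card := Fintype.card_coe R
  have hmul : (Fintype.card {v // v ∈ R}) * (2 * d) = 2 * (d * R.card) := by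
    rw [hcard]; ring
  omega

end Counting

lemma scalar_bound {β a m h₀ k : ℝ} (hβ : 0 ≤ β) (hk : k = 0 ∨ k = 1)
    (ha : a ≤ h₀) (hh : 0 ≤ h₀) (ham : |a| ≤ m) :
    |Real.exp (β * (a * k)) - 1| ≤ Real.exp (β * h₀ * k) * (1 - Real.exp (-(β * m) * k)) ∧
      Real.exp (β * (a * k)) ≤ Real.exp (β * h₀ * k) := by
  have hm : 0 ≤ m := le_trans (abs_nonneg a) ham
  rcases hk with rfl | rfl
  · simp
  · simp only [mul_one]
    have e1 : Real.exp (β * a) ≤ Real.exp (β * h₀) :=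
      Real.exp_le_exp.mpr (mul_le_mul_of_nonneg_left ha hβ)
    have e2 : Real.exp (-(β * m)) ≤ Real.exp (-(β * a)) :=
      Real.exp_le_exp.mpr (by nlinarith [le_abs_self a])
    have e3 : Real.exp (β * a) * Real.exp (-(β * a)) = 1 := by
      rw [← Real.exp_add]; norm_num
    have e6 : Real.exp (-(β * m)) ≤ 1 := by
      rw [show (1:ℝ) = Real.exp 0 by norm_num]
      exact Real.exp_le_exp.mpr (by nlinarith)
    have e7 : (1:ℝ) ≤ Real.exp (β * h₀) := by
      rw [show (1:ℝ) = Real.exp 0 by norm_num]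
      exact Real.exp_le_exp.mpr (by nlinarith)
    refine ⟨?_, e1⟩
    rcases le_or_gt 0 a with hpos | hneg
    · have e4 : (1:ℝ) ≤ Real.exp (β * a) := by
        rw [show (1:ℝ) = Real.exp 0 by norm_num]
        exact Real.exp_le_exp.mpr (by nlinarith)
      have e5 : Real.exp (-(β * a)) ≤ 1 := by
        rw [show (1:ℝ) = Real.exp 0 by norm_num]
        exact Real.exp_le_exp.mpr (by nlinarith)
      rw [abs_of_nonneg (by linarith)]
      calc Real.exp (β * a) - 1 = Real.exp (β * a) * (1 - Real.exp (-(β * a))) := by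
            rw [mul_sub, mul_one, e3]
        _ ≤ Real.exp (β * h₀) * (1 - Real.exp (-(β * m))) := by
            apply mul_le_mul e1 (by linarith) (by linarith) (Real.exp_nonneg _)
    · have e8 : Real.exp (β * a) ≤ 1 := by
        rw [show (1:ℝ) = Real.exp 0 by norm_num]
        exact Real.exp_le_exp.mpr (by nlinarith)
      have e9 : Real.exp (-(β * m)) ≤ Real.exp (β * a) :=
        Real.exp_le_exp.mpr (by nlinarith [neg_abs_le a])
      rw [abs_of_nonpos (by linarith)]
      nlinarith

lemma spin_vals {y s t : ℝ} (hs : s = -1 ∨ s = 0 ∨ s = 1) (ht : t = -1 ∨ t = 0 ∨ t = 1) :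
    (s * t + y * s ^ 2 * t ^ 2 ≤ (if y > -1 then 1 + y else 0)) ∧
      |s * t + y * s ^ 2 * t ^ 2| ≤ 1 + |y| := by
  have h1 : (0:ℝ) ≤ 1 + |y| := by positivity
  constructor
  · rcases hs with rfl | rfl | rfl <;> rcases ht with rfl | rfl | rfl <;>
      split_ifs with h <;> nlinarith [le_abs_self y, neg_abs_le y]
  · rw [abs_le]
    rcases hs with rfl | rfl | rfl <;> rcases ht with rfl | rfl | rfl <;>
      constructor <;> nlinarith [le_abs_self y, neg_abs_le y]

lemma NEdges_disjoint {V : Type*} [Fintype V] [DecidableEq V] (rank : Sym2 V → ℕ)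
    (τ : SimpleGraph V) : Disjoint (EF τ) (NEdges rank τ) := by
  rw [Finset.disjoint_left]
  intro e he hN
  exact (mem_NEdges rank |>.mp hN).2.1 he

lemma main_bound {V : Type*} [Fintype V] [DecidableEq V] (rank : Sym2 V → ℕ)
    (hrank : Function.Injective rank) (W T E : Sym2 V → ℝ) (C : ℝ)
    (hWT : ∀ e, |W e| ≤ E e * T e)
    (hW1 : ∀ e, |1 + W e| ≤ E e)
    (hT0 : ∀ e, 0 ≤ T e)
    (hEC : ∀ F : Finset (Sym2 V), ∏ e ∈ F, E e ≤ C) :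
    |∑ g ∈ Finset.univ.filter (fun g : SimpleGraph V => g.Connected), ∏ e ∈ EF g, W e|
      ≤ C * ∑ τ ∈ Finset.univ.filter (fun τ : SimpleGraph V => τ.IsTree), ∏ e ∈ EF τ, T e := by
  have hE0 : ∀ e, 0 ≤ E e := fun e => le_trans (abs_nonneg _) (hW1 e)
  rw [partition_identity rank hrank W]
  refine le_trans (Finset.abs_sum_le_sum_abs _ _) ?_
  rw [Finset.mul_sum]
  refine Finset.sum_le_sum fun τ hτ => ?_
  rw [abs_mul, Finset.abs_prod, Finset.abs_prod]
  calc (∏ e ∈ EF τ, |W e|) * ∏ e ∈ NEdges rank τ, |1 + W e|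
      ≤ (∏ e ∈ EF τ, (E e * T e)) * ∏ e ∈ NEdges rank τ, E e := by
        apply mul_le_mul
        · exact Finset.prod_le_prod (fun e _ => abs_nonneg _) (fun e _ => hWT e)
        · exact Finset.prod_le_prod (fun e _ => abs_nonneg _) (fun e _ => hW1 e)
        · exact Finset.prod_nonneg fun e _ => abs_nonneg _
        · exact Finset.prod_nonneg fun e _ => mul_nonneg (hE0 e) (hT0 e)
    _ = ((∏ e ∈ EF τ, E e) * ∏ e ∈ NEdges rank τ, E e) * ∏ e ∈ EF τ, T e := by
        rw [Finset.prod_mul_distrib]; ring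
    _ = (∏ e ∈ EF τ ∪ NEdges rank τ, E e) * ∏ e ∈ EF τ, T e := by
        rw [Finset.prod_union (NEdges_disjoint rank τ)]
    _ ≤ C * ∏ e ∈ EF τ, T e := by
        apply mul_le_mul_of_nonneg_right (hEC _)
        exact Finset.prod_nonneg fun e _ => hT0 e

/-- The Procacci–Yuhjtman tree-graph inequality specialized to the Blume-Emery-Griffiths pair
potential `V_{uv} = −(σ_u σ_v + y σ_u² σ_v²)δ_{|u−v|,1}`: for a finite `R ⊂ ℤ^d` with
`|R| = n ≥ 2`, `β ≥ 0` and any spin configuration `σ : R → {−1,0,1}`,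
`|∑_{g ∈ G_R} ∏_{{u,v} ∈ E_g} (e^{−βV_{uv}} − 1)|
  ≤ e^{βnh(y)} ∑_{τ ∈ T_R} ∏_{{u,v} ∈ E_τ} (1 − e^{−β(1+|y|)δ_{|u−v|,1}})`,
where `G_R` is the set of connected graphs with vertex set `R`, `T_R` the set of trees with
vertex set `R`, and `h(y) = d(1+y)` if `y > −1`, `h(y) = 0` if `y ≤ −1`. -/
theorem stmt19 (d : ℕ) (hd : 1 ≤ d) (β : ℝ) (hβ : 0 ≤ β) (y : ℝ) (n : ℕ) (hn : 2 ≤ n)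
    (R : Finset (Fin d → ℤ)) (hR : R.card = n)
    (σ : (Fin d → ℤ) → ℝ) (hσ : ∀ v ∈ R, σ v = -1 ∨ σ v = 0 ∨ σ v = 1) :
    |∑ g ∈ Finset.univ.filter (fun g : SimpleGraph {v // v ∈ R} => g.Connected),
        ∏ e ∈ g.edgeFinset,
          Sym2.lift ⟨fun u v : {v // v ∈ R} =>
              Real.exp (β * ((σ u.1 * σ v.1 + y * (σ u.1) ^ 2 * (σ v.1) ^ 2) *
                kron u.1 v.1)) - 1,
            fun u v => by
              dsimp only
              rw [kron_comm u.1 v.1,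
                show σ u.1 * σ v.1 + y * (σ u.1) ^ 2 * (σ v.1) ^ 2
                    = σ v.1 * σ u.1 + y * (σ v.1) ^ 2 * (σ u.1) ^ 2 by ring]⟩ e|
      ≤ Real.exp (β * n * (if y > -1 then (d : ℝ) * (1 + y) else 0)) *
          ∑ t ∈ Finset.univ.filter (fun t : SimpleGraph {v // v ∈ R} => t.IsTree),
            ∏ e ∈ t.edgeFinset,
              Sym2.lift ⟨fun u v : {v // v ∈ R} =>
                  1 - Real.exp (-(β * (1 + |y|)) * kron u.1 v.1),
                fun u v => by dsimp only; rw [kron_comm u.1 v.1]⟩ e := by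
  classical
  have hcast : (Fintype.card {v // v ∈ R}) = n := by rw [Fintype.card_coe, hR]
  -- an injective rank function on edges
  set eqv := Fintype.equivFin (Sym2 {v // v ∈ R}) with heqv
  have hrank : Function.Injective (fun e => (eqv e : ℕ)) :=
    fun a b h => eqv.injective (Fin.val_injective h)
  -- the kron weight on edges
  set krS : Sym2 {v // v ∈ R} → ℝ :=
    Sym2.lift ⟨fun u v => kron u.1 v.1, fun u v => kron_comm u.1 v.1⟩ with hkrS
  have hk01 : ∀ u v : {v // v ∈ R}, kron u.1 v.1 = 0 ∨ kron u.1 v.1 = 1 := by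
    intro u v
    rw [kron]
    split_ifs <;> simp
  have hh₀ : (0:ℝ) ≤ if y > -1 then 1 + y else 0 := by
    split_ifs with h
    · linarith
    · exact le_refl 0
  simp only [← EF_eq]
  refine main_bound (fun e => (eqv e : ℕ)) hrank _ _
    (fun e => Real.exp (β * (if y > -1 then 1 + y else 0) * krS e)) _ ?_ ?_ ?_ ?_
  · -- |W e| ≤ E e * T e
    intro e
    induction e using Sym2.ind with
    | _ u v =>
    simp only [Sym2.lift_mk, hkrS]
    exact (scalar_bound hβ (hk01 u v) (spin_vals (hσ u.1 u.2) (hσ v.1 v.2)).1 hh₀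
      (spin_vals (hσ u.1 u.2) (hσ v.1 v.2)).2).1
  · -- |1 + W e| ≤ E e
    intro e
    induction e using Sym2.ind with
    | _ u v =>
    simp only [Sym2.lift_mk, hkrS]
    rw [show (1:ℝ) + (Real.exp (β * ((σ u.1 * σ v.1 + y * (σ u.1) ^ 2 * (σ v.1) ^ 2) *
        kron u.1 v.1)) - 1) = Real.exp (β * ((σ u.1 * σ v.1 + y * (σ u.1) ^ 2 * (σ v.1) ^ 2) *
        kron u.1 v.1)) by ring]
    rw [abs_of_pos (Real.exp_pos _)]
    exact (scalar_bound hβ (hk01 u v) (spin_vals (hσ u.1 u.2) (hσ v.1 v.2)).1 hh₀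
      (spin_vals (hσ u.1 u.2) (hσ v.1 v.2)).2).2
  · -- 0 ≤ T e
    intro e
    induction e using Sym2.ind with
    | _ u v =>
    simp only [Sym2.lift_mk]
    have h1 : -(β * (1 + |y|)) * kron u.1 v.1 ≤ 0 := by
      rcases hk01 u v with h | h <;> rw [h] <;> nlinarith [abs_nonneg y]
    have h2 : Real.exp (-(β * (1 + |y|)) * kron u.1 v.1) ≤ 1 :=
      le_trans (Real.exp_le_exp.mpr h1) (le_of_eq Real.exp_zero)
    linarith
  · -- product bound
    intro F
    rw [← Real.exp_sum]
    apply Real.exp_le_exp.mpr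
    rw [← Finset.mul_sum]
    -- kron indicator
    have hkr : ∀ e : Sym2 {v // v ∈ R}, krS e = if e ∈ EF (NNg R) then (1:ℝ) else 0 := by
      intro e
      induction e using Sym2.ind with
      | _ u v =>
      have hadj : (s(u,v) ∈ EF (NNg R)) ↔ dist1 u.1 v.1 = 1 := by
        rw [mem_EF]
        exact SimpleGraph.mem_edgeSet _
      simp only [Sym2.lift_mk, hkrS]
      rw [kron]
      by_cases h : dist1 u.1 v.1 = 1 <;> simp [h, hadj]
    have hsum : ∑ e ∈ F, krS e ≤ ((d * n : ℕ) : ℝ) := by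
      calc ∑ e ∈ F, krS e = ∑ e ∈ F, (if e ∈ EF (NNg R) then (1:ℝ) else 0) :=
            Finset.sum_congr rfl fun e _ => hkr e
        _ = ((F ∩ EF (NNg R)).card : ℝ) := by
            rw [Finset.sum_ite_mem, Finset.sum_const]
            simp
        _ ≤ ((d * n : ℕ) : ℝ) := by
            have h1 : (F ∩ EF (NNg R)).card ≤ (EF (NNg R)).card :=
              Finset.card_le_card Finset.inter_subset_right
            have h2 := card_NN_le (R := R) hd
            rw [hR] at h2
            exact_mod_cast le_trans h1 h2
    have hfin : (if y > -1 then (d:ℝ) * (1 + y) else 0)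
        = (d:ℝ) * (if y > -1 then 1 + y else 0) := by
      split_ifs <;> ring
    rw [hfin]
    have hb : 0 ≤ β * (if y > -1 then 1 + y else 0) := mul_nonneg hβ hh₀
    have := mul_le_mul_of_nonneg_left hsum hb
    push_cast at this ⊢
    nlinarith [this]

end
end
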